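/- arXiv:1108.5621 — 2 statements merged into one kernel-verified Lean document; each statement's English description precedes it below -/
import Mathlib

section
/- For every z in the open unit disk of ℂ, the number ρ(z) = (1 − √(1 − z²))/z (extended by ρ(0) = 0) satisfies |ρ(z)| < 1, where √ denotes the principal branch of the square root. -/
open Complex

/-- `ρ(z) = (1 - √(1-z²))/z`, with the principal branch of the square root
(given by the complex power `w ^ (1/2)`).  Note `ρ(0) = 0` since `0/0 = 0` in Lean. -/
noncomputable def rho (z : ℂ) : ℂ := (1 - (1 - z ^ 2) ^ ((1 : ℂ) / 2)) / z

/-!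
Put `s = √(1 - z²)`, so that `z² = (1 - s)(1 + s)`. The principal square root of a point of the
slit plane has positive real part, so `s` is closer to `1` than to `-1`: `‖1 - s‖ < ‖1 + s‖`.
Hence `‖1 - s‖² < ‖1 - s‖ ‖1 + s‖ = ‖z‖²`, i.e. `‖ρ(z)‖ = ‖1 - s‖ / ‖z‖ < 1`.
-/

namespace Complex

lemma re_cpow_inv_two_pos {x : ℂ} (hx : x ∈ slitPlane) : 0 < (x ^ (2⁻¹ : ℂ)).re := by
  rw [cpow_inv_two_re, Real.sqrt_pos]
  have hre : 0 < ‖x‖ + x.re := by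
    rcases mem_slitPlane_iff.1 hx with hre | him
    · linarith [norm_nonneg x]
    · linarith [neg_abs_le x.re, abs_re_lt_norm.2 him]
  positivity

lemma norm_one_sub_lt_norm_one_add {s : ℂ} (hs : 0 < s.re) : ‖1 - s‖ < ‖1 + s‖ := by
  rw [← sq_lt_sq₀ (norm_nonneg _) (norm_nonneg _), Complex.sq_norm, Complex.sq_norm,
    normSq_apply, normSq_apply]
  simp only [sub_re, sub_im, add_re, add_im, one_re, one_im]
  nlinarith

lemma norm_one_sub_lt_of_sq_eq_one_sub_sq {s z : ℂ} (hs : 0 < s.re) (hz : z ≠ 0)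
    (h : s ^ 2 = 1 - z ^ 2) : ‖1 - s‖ < ‖z‖ := by
  have hfac : ‖z‖ ^ 2 = ‖1 - s‖ * ‖1 + s‖ := by
    rw [← norm_pow, ← norm_mul]
    congr 1
    linear_combination h
  have hpos : 0 < ‖1 - s‖ :=
    pos_of_mul_pos_left (hfac ▸ pow_pos (norm_pos_iff.2 hz) 2) (norm_nonneg _)
  refine (sq_lt_sq₀ (norm_nonneg _) (norm_nonneg _)).1 ?_
  rw [sq, hfac]
  exact mul_lt_mul_of_pos_left (norm_one_sub_lt_norm_one_add hs) hpos

end Complex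

/-- For every `z` in the open unit disk, `|ρ(z)| < 1`. -/
theorem stmt_1 (z : ℂ) (hz : ‖z‖ < 1) : ‖rho z‖ < 1 := by
  rcases eq_or_ne z 0 with rfl | hz0
  · simp [rho]
  have hz2 : ‖-z ^ 2‖ < 1 := by simpa using pow_lt_one₀ (norm_nonneg z) hz two_ne_zero
  have hslit : 1 - z ^ 2 ∈ slitPlane := by
    simpa [sub_eq_add_neg] using mem_slitPlane_of_norm_lt_one hz2
  rw [rho, norm_div, div_lt_one (norm_pos_iff.2 hz0), one_div]
  exact norm_one_sub_lt_of_sq_eq_one_sub_sq (re_cpow_inv_two_pos hslit) hz0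
    (cpow_ofNat_inv_pow _ 2)
end

section
/- For every real ω with ω ∉ ℕ, the Taylor coefficients of (1−z)^ω satisfy [zⁿ](1−z)^ω = (1/Γ(−ω)) · n^{−ω−1} · (1 + ω(ω+1)/(2n) + O(1/n²)) as n → ∞. -/
/-!
With `s = -ω` the coefficient is `c n = s (s + 1) ⋯ (s + n - 1) / n!`. Euler's limit formula for
`Γ` gives `u n = Γ(s) c n n^(1-s) → 1`, and `u (n + 1) / u n = (1 + s/n) (1 + 1/n)^(-s)`.
Dividing by `t n = 1 + s (s - 1) / (2n)` makes the ratio of consecutive terms `1 + O(n⁻³)`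
(the binomial series to second order), so `w = u / t` has increments `O(n⁻³)`; telescoping
against its limit `1` gives `w n = 1 + O(n⁻²)`, i.e. `c n = n^(s-1) t n (1 + O(n⁻²)) / Γ(s)`.
-/

open Complex Filter Asymptotics

/-- The `n`-th Taylor coefficient of `f` at `0`, i.e. `f⁽ⁿ⁾(0)/n!`. -/
noncomputable def taylorCoeff (f : ℂ → ℂ) (n : ℕ) : ℂ :=
  iteratedDeriv n f 0 / (n.factorial : ℂ)

open Finset Topology

def ascFactorialDivFactorial {K : Type*} [Field K] (s : K) (n : ℕ) : K :=
  (∏ k ∈ range n, (s + k)) / n.factorial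

theorem iteratedDeriv_one_sub_cpow (a : ℂ) (n : ℕ) {z : ℂ} (hz : 1 - z ∈ slitPlane) :
    iteratedDeriv n (fun z => (1 - z) ^ a) z
      = (∏ k ∈ range n, (-a + k)) * (1 - z) ^ (a - n) := by
  induction n generalizing z with
  | zero => simp
  | succ n ih =>
    have hopen : IsOpen {z : ℂ | 1 - z ∈ slitPlane} :=
      isOpen_slitPlane.preimage (continuous_const.sub continuous_id)
    have hloc : iteratedDeriv n (fun z => (1 - z) ^ a)
        =ᶠ[𝓝 z] fun z => (∏ k ∈ range n, (-a + k)) * (1 - z) ^ (a - n) :=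
      Filter.eventually_of_mem (hopen.mem_nhds hz) fun _ => ih
    have hderiv : HasDerivAt (fun z => (1 - z) ^ (a - n))
        ((a - n) * (1 - z) ^ (a - n - 1) * -1) z :=
      ((hasDerivAt_id z).const_sub 1).cpow_const hz
    rw [iteratedDeriv_succ, hloc.deriv_eq, (hderiv.const_mul _).deriv, prod_range_succ]
    push_cast
    ring_nf

theorem taylorCoeff_one_sub_cpow (a : ℂ) (n : ℕ) :
    taylorCoeff (fun z => (1 - z) ^ a) n = ascFactorialDivFactorial (-a) n := by
  rw [taylorCoeff, iteratedDeriv_one_sub_cpow a n (by simp), sub_zero, one_cpow, mul_one,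
    ascFactorialDivFactorial]

theorem dist_le_of_dist_succ_le_sub {α : Type*} [PseudoMetricSpace α] {w : ℕ → α}
    {v : ℕ → ℝ} {L : α} {n : ℕ} (hw : Tendsto w atTop (𝓝 L))
    (hv : Tendsto v atTop (𝓝 0))
    (hstep : ∀ m ≥ n, dist (w m) (w (m + 1)) ≤ v m - v (m + 1)) : dist (w n) L ≤ v n := by
  have htele : ∀ m ≥ n, dist (w n) (w m) ≤ v n - v m := by
    intro m hm
    induction m, hm using Nat.le_induction with
    | base => simp
    | succ m hm ih => linarith [dist_triangle (w n) (w m) (w (m + 1)), hstep m hm]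
  have := le_of_tendsto_of_tendsto (tendsto_const_nhds.dist hw) (tendsto_const_nhds.sub hv)
    (eventually_atTop.2 ⟨n, htele⟩)
  simpa using this

theorem inv_pow_three_le_two_mul_inv_sq_sub {m : ℝ} (hm : 1 ≤ m) :
    (m ^ 3)⁻¹ ≤ 2 * ((m ^ 2)⁻¹ - ((m + 1) ^ 2)⁻¹) := by
  have hm0 : 0 < m := by linarith
  rw [inv_sub_inv (by positivity) (by positivity), ← mul_div_assoc, inv_eq_one_div,
    div_le_div_iff₀ (by positivity) (by positivity)]
  nlinarith [pow_pos hm0 3, pow_pos hm0 4]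

theorem isBigO_sub_of_tendsto_of_isBigO_sub_succ {E : Type*} [NormedAddCommGroup E]
    {w : ℕ → E} {L : E} (hw : Tendsto w atTop (𝓝 L))
    (hstep : (fun n => w (n + 1) - w n) =O[atTop] fun n => ((n : ℝ) ^ 3)⁻¹) :
    (fun n => w n - L) =O[atTop] fun n => ((n : ℝ) ^ 2)⁻¹ := by
  obtain ⟨C, hC, hCw⟩ := hstep.exists_pos
  obtain ⟨N, hN⟩ := eventually_atTop.1 hCw.bound
  have hv : Tendsto (fun m : ℕ => 2 * C * ((m : ℝ) ^ 2)⁻¹) atTop (𝓝 0) := by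
    simpa using ((tendsto_inv_atTop_zero.comp tendsto_natCast_atTop_atTop).pow 2).const_mul (2 * C)
  refine IsBigO.of_bound (2 * C) ?_
  filter_upwards [eventually_ge_atTop (max N 1)] with n hn
  rw [← dist_eq_norm, norm_inv, norm_pow, Real.norm_natCast]
  refine dist_le_of_dist_succ_le_sub hw hv fun m hm => ?_
  have hm1 : (1 : ℝ) ≤ m := by exact_mod_cast (le_max_right N 1).trans (hn.trans hm)
  calc dist (w m) (w (m + 1)) ≤ C * ((m : ℝ) ^ 3)⁻¹ := by
        simpa [dist_eq_norm', abs_of_pos (by positivity : (0 : ℝ) < m ^ 3)]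
          using hN m ((le_max_left N 1).trans (hn.trans hm))
    _ ≤ C * (2 * (((m : ℝ) ^ 2)⁻¹ - (((m : ℝ) + 1) ^ 2)⁻¹)) :=
        mul_le_mul_of_nonneg_left (inv_pow_three_le_two_mul_inv_sq_sub hm1) hC.le
    _ = _ := by push_cast; ring

theorem ascFactorialDivFactorial_succ {K : Type*} [Field K] [CharZero K] (s : K) (n : ℕ) :
    ascFactorialDivFactorial s (n + 1) = ascFactorialDivFactorial s n * (s + n) / (n + 1) := by
  simp only [ascFactorialDivFactorial, prod_range_succ, Nat.factorial_succ]
  push_cast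
  field_simp

theorem Real.GammaSeq_eq_rpow_div (s : ℝ) (n : ℕ) :
    Real.GammaSeq s n = (n : ℝ) ^ s / (ascFactorialDivFactorial s n * (s + n)) := by
  have : (n.factorial : ℝ) ≠ 0 := by positivity
  rw [Real.GammaSeq, ascFactorialDivFactorial, prod_range_succ]
  field_simp

theorem tendsto_Gamma_mul_ascFactorialDivFactorial_mul_rpow {s : ℝ} (hs : ∀ m : ℕ, s ≠ -m) :
    Tendsto (fun n : ℕ => Real.Gamma s * ascFactorialDivFactorial s n * (n : ℝ) ^ (1 - s))
      atTop (𝓝 1) := by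
  have hΓ := Real.Gamma_ne_zero hs
  have hlim := ((tendsto_const_nhds (x := Real.Gamma s)).div (Real.GammaSeq_tendsto_Gamma s)
    hΓ).mul (tendsto_natCast_div_add_atTop s)
  rw [div_self hΓ, one_mul] at hlim
  refine hlim.congr' ?_
  filter_upwards [eventually_ne_atTop 0] with n hn
  have hn' : (n : ℝ) ≠ 0 := by exact_mod_cast hn
  have hsn : (n : ℝ) + s ≠ 0 := fun h => hs n (by linarith)
  rw [Pi.div_apply, Real.GammaSeq_eq_rpow_div, Real.rpow_sub (by positivity), Real.rpow_one]
  field_simp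
  ring

theorem ascFactorialDivFactorial_succ_mul_rpow (s : ℝ) {n : ℕ} (hn : n ≠ 0) :
    ascFactorialDivFactorial s (n + 1) * ((n + 1 : ℕ) : ℝ) ^ (1 - s)
      = ascFactorialDivFactorial s n * (n : ℝ) ^ (1 - s)
        * ((1 + s * (n : ℝ)⁻¹) * (1 + (n : ℝ)⁻¹) ^ (-s)) := by
  have hn' : (0 : ℝ) < n := by positivity
  rw [ascFactorialDivFactorial_succ, show 1 + (n : ℝ)⁻¹ = (n + 1) / n by field_simp,
    Real.rpow_neg (by positivity), Real.div_rpow (by positivity) hn'.le]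
  push_cast
  rw [Real.rpow_sub hn', Real.rpow_sub (by positivity), Real.rpow_one, Real.rpow_one]
  field_simp
  ring

noncomputable def correctionFactor (s : ℝ) (n : ℕ) : ℝ := 1 + s * (s - 1) / (2 * n)

theorem correctionFactor_eq (s : ℝ) (n : ℕ) :
    correctionFactor s n = 1 + s * (s - 1) / 2 * (n : ℝ)⁻¹ := by
  rw [correctionFactor]
  ring

theorem correctionFactor_succ {n : ℕ} (s : ℝ) (hn : n ≠ 0) :
    correctionFactor s (n + 1) = 1 + s * (s - 1) / 2 * ((n : ℝ)⁻¹ / (1 + (n : ℝ)⁻¹)) := by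
  have : (n : ℝ) ≠ 0 := by exact_mod_cast hn
  rw [correctionFactor]
  push_cast
  field_simp

theorem tendsto_correctionFactor (s : ℝ) : Tendsto (correctionFactor s) atTop (𝓝 1) := by
  have := (tendsto_inv_atTop_zero.comp tendsto_natCast_atTop_atTop).const_mul (s * (s - 1) / 2)
    |>.const_add 1
  rw [mul_zero, add_zero] at this
  exact this.congr fun n => (correctionFactor_eq s n).symm

theorem Real.one_add_rpow_sub_quadratic_isBigO (a : ℝ) :
    (fun x : ℝ => (1 + x) ^ a - (1 + a * x + a * (a - 1) / 2 * x ^ 2))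
      =O[𝓝 0] fun x => x ^ 3 := by
  have h := Real.one_add_rpow_hasFPowerSeriesAt_zero (a := a) |>.isBigO_sub_partialSum_pow 3
  have h2 : Ring.choose a 2 = a * (a - 1) / 2 := by
    rw [Ring.choose_eq_smul]
    simp only [Nat.factorial_two, Nat.cast_ofNat, descPochhammer_succ_right, descPochhammer_zero,
      CharP.cast_eq_zero, sub_zero, one_mul, Nat.cast_one, Polynomial.smeval_mul,
      Polynomial.smeval_X, pow_one, Polynomial.smeval_sub, Polynomial.smeval_one, pow_zero,
      one_smul, smul_eq_mul]
    ring
  simp only [zero_add, FormalMultilinearSeries.partialSum, sum_range_succ, sum_range_zero,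
    binomialSeries_apply, List.ofFn_succ, List.ofFn_zero, List.prod_cons, List.prod_nil,
    Ring.choose_zero_right, Ring.choose_one_right, h2, smul_eq_mul, Real.norm_eq_abs, ← abs_pow,
    isBigO_abs_right] at h
  refine h.congr_left fun x => ?_
  ring

theorem one_add_mul_mul_one_add_rpow_neg_sub_isBigO (s : ℝ) :
    (fun x : ℝ => (1 + s * x) * (1 + x) ^ (-s) - (1 - s * (s - 1) / 2 * x ^ 2))
      =O[𝓝 0] fun x => x ^ 3 := by
  have hlin : (fun x : ℝ => 1 + s * x) =O[𝓝 0] fun _ => (1 : ℝ) :=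
    (continuous_const.add (continuous_const_mul s)).continuousAt.isBigO_one ℝ
  have hprod := hlin.mul (Real.one_add_rpow_sub_quadratic_isBigO (-s))
  simp only [one_mul] at hprod
  -- `(1 + s x) (1 - s x + s (s + 1) / 2 x²) = 1 - s (s - 1) / 2 x² + s² (s + 1) / 2 x³`
  have := hprod.add ((isBigO_refl (fun x : ℝ => x ^ 3) _).const_mul_left (s ^ 2 * (s + 1) / 2))
  refine this.congr_left fun x => ?_
  ring

/-- At `x = 1 / n` this is `w (n + 1) / w n - 1` for
`w n = Γ(s) * ascFactorialDivFactorial s n * n ^ (1 - s) / correctionFactor s n`. -/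
theorem step_ratio_sub_one_isBigO (s : ℝ) :
    (fun x : ℝ => (1 + s * x) * (1 + x) ^ (-s) * (1 + s * (s - 1) / 2 * x)
        / (1 + s * (s - 1) / 2 * (x / (1 + x))) - 1) =O[𝓝 0] fun x => x ^ 3 := by
  set σ := s * (s - 1) / 2
  have hx : ∀ᶠ x : ℝ in 𝓝 0, 1 + x ≠ 0 :=
    (continuousAt_const.add continuousAt_id).eventually_ne (by norm_num)
  have hden : Tendsto (fun x : ℝ => 1 + σ * (x / (1 + x))) (𝓝 0) (𝓝 1) := by
    have : ContinuousAt (fun x : ℝ => 1 + σ * (x / (1 + x))) 0 :=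
      continuousAt_const.add (continuousAt_const.mul
        (continuousAt_id.div (continuousAt_const.add continuousAt_id) (by norm_num)))
    simpa using this.tendsto
  have hcorr : (fun x : ℝ => σ / (1 + x) + σ ^ 2) =O[𝓝 0] fun _ => (1 : ℝ) := by
    have : ContinuousAt (fun x : ℝ => σ / (1 + x) + σ ^ 2) 0 :=
      (continuousAt_const.div (continuousAt_const.add continuousAt_id) (by norm_num)).add
        continuousAt_const
    exact this.isBigO_one ℝ
  have hlin : (fun x : ℝ => 1 + σ * x) =O[𝓝 0] fun _ => (1 : ℝ) :=
    (continuous_const.add (continuous_const_mul σ)).continuousAt.isBigO_one ℝ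
  -- with `q x = 1 - σ x²`: `q x (1 + σ x) - (1 + σ x / (1 + x)) = -x³ (σ / (1 + x) + σ²)`
  have hnum := ((one_add_mul_mul_one_add_rpow_neg_sub_isBigO s).mul hlin).sub
    ((isBigO_refl (fun x : ℝ => x ^ 3) _).mul hcorr)
  have := hnum.mul ((hden.inv₀ one_ne_zero).isBigO_one ℝ)
  simp only [mul_one] at this
  refine this.congr' ?_ EventuallyEq.rfl
  filter_upwards [hx, hden.eventually_ne one_ne_zero] with x hx hD
  rw [div_sub_one hD, div_eq_mul_inv]
  congr 1
  simp only [σ]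
  field_simp
  ring

theorem ascFactorialDivFactorial_sub_isBigO {s : ℝ} (hs : ∀ m : ℕ, s ≠ -m) :
    (fun n : ℕ => ascFactorialDivFactorial s n
        - 1 / Real.Gamma s * (n : ℝ) ^ (s - 1) * correctionFactor s n)
      =O[atTop] fun n => (n : ℝ) ^ (s - 1) * ((n : ℝ) ^ 2)⁻¹ := by
  set u : ℕ → ℝ := fun n => Real.Gamma s * ascFactorialDivFactorial s n * (n : ℝ) ^ (1 - s)
  set w : ℕ → ℝ := fun n => u n / correctionFactor s n
  have ht := tendsto_correctionFactor s
  have ht0 : ∀ᶠ n in atTop, correctionFactor s n ≠ 0 := ht.eventually_ne one_ne_zero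
  have hw : Tendsto w atTop (𝓝 1) := by
    have := (tendsto_Gamma_mul_ascFactorialDivFactorial_mul_rpow hs).div ht one_ne_zero
    rwa [div_one] at this
  have hinv : Tendsto (fun n : ℕ => (n : ℝ)⁻¹) atTop (𝓝 0) :=
    tendsto_inv_atTop_zero.comp tendsto_natCast_atTop_atTop
  have hstep : (fun n => w (n + 1) - w n) =O[atTop] fun n => ((n : ℝ) ^ 3)⁻¹ := by
    have := (hw.isBigO_one ℝ).mul ((step_ratio_sub_one_isBigO s).comp_tendsto hinv)
    refine this.congr' ?_ (Eventually.of_forall fun n => by simp [inv_pow])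
    filter_upwards [eventually_ne_atTop 0, ht0, (tendsto_add_atTop_nat 1).eventually ht0]
      with n hn h0 h1
    have hu : u (n + 1) = u n * ((1 + s * (n : ℝ)⁻¹) * (1 + (n : ℝ)⁻¹) ^ (-s)) := by
      simp only [u, mul_assoc, ascFactorialDivFactorial_succ_mul_rpow s hn]
    simp only [w, Function.comp_apply]
    rw [hu, ← correctionFactor_succ s hn, ← correctionFactor_eq s n]
    field_simp
  have hwL := isBigO_sub_of_tendsto_of_isBigO_sub_succ hw hstep
  have := (((isBigO_refl (fun n : ℕ => (n : ℝ) ^ (s - 1)) atTop).const_mul_left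
    (1 / Real.Gamma s)).mul (ht.isBigO_one ℝ)).mul hwL
  simp only [mul_one] at this
  refine this.congr' ?_ EventuallyEq.rfl
  filter_upwards [eventually_ne_atTop 0, ht0] with n hn h0
  have hn' : (0 : ℝ) < n := by positivity
  have hΓ := Real.Gamma_ne_zero hs
  simp only [w, u]
  rw [Real.rpow_sub hn', Real.rpow_sub hn', Real.rpow_one]
  field_simp

/-- For real `ω ∉ ℕ`:
`[zⁿ](1-z)^ω = (1/Γ(-ω)) n^{-ω-1} (1 + ω(ω+1)/(2n) + O(1/n²))` as `n → ∞`,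
with the principal branch of `(1-z)^ω`. -/
theorem stmt_16 (ω : ℝ) (hω : ∀ m : ℕ, ω ≠ m) :
    (fun n : ℕ =>
        taylorCoeff (fun z : ℂ => (1 - z) ^ (ω : ℂ)) n
          - ((1 / Real.Gamma (-ω) * (n : ℝ) ^ (-ω - 1)
              * (1 + ω * (ω + 1) / (2 * n)) : ℝ) : ℂ))
      =O[atTop] (fun n : ℕ => (n : ℝ) ^ (-ω - 1) * (n : ℝ) ^ (-(2 : ℝ))) := by
  have hs : ∀ m : ℕ, -ω ≠ -m := fun m h => hω m (neg_inj.1 h)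
  have hcoeff (n : ℕ) : taylorCoeff (fun z : ℂ => (1 - z) ^ (ω : ℂ)) n
      = ((ascFactorialDivFactorial (-ω) n : ℝ) : ℂ) := by
    rw [taylorCoeff_one_sub_cpow]
    simp [ascFactorialDivFactorial]
  simp_rw [hcoeff, ← Complex.ofReal_sub, isBigO_ofReal_left]
  convert ascFactorialDivFactorial_sub_isBigO hs using 3 with n n
  · rw [correctionFactor]
    ring
  · rw [Real.rpow_neg n.cast_nonneg, Real.rpow_two]
end
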